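/- Let R be a 2- and 3-torsion free alternative ring with a nontrivial idempotent e₁ satisfying conditions (1), (2) and (3). Then: (♠) whenever a₁₁ ∈ R₁₁ and a₂₂ ∈ R₂₂ satisfy [a₁₁ + a₂₂, x] = 0 for all x ∈ R₁₂, one has a₁₁ + a₂₂ ∈ Z(R); and (♣) whenever a₁₁ ∈ R₁₁ and a₂₂ ∈ R₂₂ satisfy [a₁₁ + a₂₂, x] = 0 for all x ∈ R₂₁, one has a₁₁ + a₂₂ ∈ Z(R). -/

import Mathlib

/-- The commutative center of a (possibly non-associative, non-unital) ring. -/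
def rctr (R : Type*) [NonUnitalNonAssocRing R] : Set R := {z | ∀ x, z * x = x * z}

/-- `R` is an alternative ring. -/
def IsAlt (R : Type*) [NonUnitalNonAssocRing R] : Prop :=
  ∀ x y : R, (x * x) * y = x * (x * y) ∧ (y * x) * x = y * (x * x)

/-- Peirce components relative to an idempotent `e`. -/
def P11 {R : Type*} [NonUnitalNonAssocRing R] (e : R) : Set R := {x | e * x = x ∧ x * e = x}
def P12 {R : Type*} [NonUnitalNonAssocRing R] (e : R) : Set R := {x | e * x = x ∧ x * e = 0}
def P21 {R : Type*} [NonUnitalNonAssocRing R] (e : R) : Set R := {x | e * x = 0 ∧ x * e = x}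
def P22 {R : Type*} [NonUnitalNonAssocRing R] (e : R) : Set R := {x | e * x = 0 ∧ x * e = 0}

/-- The iterated commutator `p_n`: `p_1(x) = x`,
`p_n(x_1,…,x_n) = [p_{n-1}(x_1,…,x_{n-1}), x_n]`. -/
def pn {R : Type*} [NonUnitalNonAssocRing R] : (n : ℕ) → (Fin n → R) → R
  | 0, _ => 0
  | 1, x => x 0
  | (m+2), x =>
      pn (m+1) (fun i => x i.castSucc) * x (Fin.last (m+1))
        - x (Fin.last (m+1)) * pn (m+1) (fun i => x i.castSucc)

/-- A (not necessarily additive) map `D` is a multiplicative Lie `n`-derivation. -/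
def IsMultLieNDeriv {R : Type*} [NonUnitalNonAssocRing R] (n : ℕ) (D : R → R) : Prop :=
  ∀ x : Fin n → R, D (pn n x) = ∑ i : Fin n, pn n (Function.update x i (D (x i)))

/-! In an alternative ring `⁅u, r * x⁆ = ⁅u, r⁆ * x + r * ⁅u, x⁆ - 3 • (u, r, x)` and
`(u, x, r) = -(u, r, x)`, so if `u` commutes with `x`, `r * x` and `x * r`, the associator
terms cancel and `⁅u, r⁆ * x + x * ⁅u, r⁆ = 0`.

Let `u = a₁₁ + a₂₂` commute with `R₁₂` and take `x ∈ R₁₂`. For `r ∈ R₁₁` or `r ∈ R₂₂` the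
Peirce rules make one of `r * x`, `x * r` zero and put the other in `R₁₂`, and they kill one
of the two summands, so `⁅u, r⁆` is annihilated by `R₁₂` and vanishes by (2) or (3). For
`r ∈ R₂₁` the products `r * x ∈ R₂₂` and `x * r ∈ R₁₁` now commute with `u`, and the two
summands lie in `R₂₂` and `R₁₁`, so both vanish and (1) gives `⁅u, r⁆ = 0`. The Peirce
decomposition puts `u` in the center. (♣) is (♠) for the opposite ring, where `R₁₂` and
`R₂₁` trade places. -/

section PeirceSub

variable {R : Type*} [NonUnitalNonAssocRing R] {e a b : R}

theorem P11_sub_mem (ha : a ∈ P11 e) (hb : b ∈ P11 e) : a - b ∈ P11 e :=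
  ⟨by rw [mul_sub, ha.1, hb.1], by rw [sub_mul, ha.2, hb.2]⟩

theorem P21_sub_mem (ha : a ∈ P21 e) (hb : b ∈ P21 e) : a - b ∈ P21 e :=
  ⟨by rw [mul_sub, ha.1, hb.1, sub_zero], by rw [sub_mul, ha.2, hb.2]⟩

theorem P22_sub_mem (ha : a ∈ P22 e) (hb : b ∈ P22 e) : a - b ∈ P22 e :=
  ⟨by rw [mul_sub, ha.1, hb.1, sub_zero], by rw [sub_mul, ha.2, hb.2, sub_zero]⟩

end PeirceSub

namespace IsAlt

variable {R : Type*} [NonUnitalNonAssocRing R]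

theorem associator_swap_left (halt : IsAlt R) (x y z : R) :
    associator y x z = -associator x y z := by
  have h := (halt (x + y) z).1
  have hx := (halt x z).1
  have hy := (halt y z).1
  simp only [associator_apply, add_mul, mul_add] at h ⊢
  linear_combination (norm := abel) h - hx - hy

theorem associator_swap_right (halt : IsAlt R) (x y z : R) :
    associator x z y = -associator x y z := by
  have h := (halt (y + z) x).2
  have hy := (halt y x).2
  have hz := (halt z x).2
  simp only [associator_apply, add_mul, mul_add] at h ⊢
  linear_combination (norm := abel) h - hy - hz

theorem mulOpposite (halt : IsAlt R) : IsAlt Rᵐᵒᵖ := fun x y =>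
  ⟨congrArg MulOpposite.op (halt x.unop y.unop).2.symm,
    congrArg MulOpposite.op (halt x.unop y.unop).1.symm⟩

theorem mul_mul_expand_left (halt : IsAlt R) (e s t : R) :
    e * (s * t) = e * s * t + s * e * t - s * (e * t) := by
  have h := halt.associator_swap_left e s t
  simp only [associator_apply] at h
  linear_combination (norm := abel) -h

theorem mul_mul_expand_right (halt : IsAlt R) (e s t : R) :
    s * t * e = s * (t * e) - s * e * t + s * (e * t) := by
  have h := halt.associator_swap_right s e t
  simp only [associator_apply] at h
  linear_combination (norm := abel) h

theorem flexible (halt : IsAlt R) (x y : R) : x * y * x = x * (y * x) := by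
  have h := halt.associator_swap_left x y x
  have hy := (halt x y).2
  simp only [associator_apply] at h
  linear_combination (norm := abel) h - hy

theorem lie_mul (halt : IsAlt R) (u r x : R) :
    ⁅u, r * x⁆ = ⁅u, r⁆ * x + r * ⁅u, x⁆ - 3 • associator u r x := by
  have h₁ := halt.associator_swap_left u r x
  have h₂ := halt.associator_swap_right r u x
  simp only [associator_apply] at h₁ h₂ ⊢
  simp only [Ring.lie_def, sub_mul, mul_sub]
  linear_combination (norm := abel) 2 • h₁ - h₂

theorem lie_mul_add_mul_lie_eq_zero (halt : IsAlt R) {u r x : R} (hx : Commute u x)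
    (hrx : Commute u (r * x)) (hxr : Commute u (x * r)) :
    ⁅u, r⁆ * x + x * ⁅u, r⁆ = 0 := by
  have h₁ := halt.lie_mul u r x
  have h₂ := halt.lie_mul u x r
  rw [commute_iff_lie_eq] at hx hrx hxr
  rw [hrx, hx, mul_zero] at h₁
  rw [hxr, hx, zero_mul, halt.associator_swap_right] at h₂
  linear_combination (norm := abel) -h₁ - h₂

variable {e p : R}

theorem eq_zero_of_idem_mul_eq_add_self (halt : IsAlt R)
    (htor2 : ∀ x : R, (2 : ℕ) • x = 0 → x = 0) (he : e * e = e) (h : e * p = p + p) :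
    p = 0 := by
  have h' := (halt e p).1
  rw [he, h, mul_add, h] at h'
  exact htor2 p (by linear_combination (norm := abel) -h')

theorem eq_zero_of_idem_mul_eq_neg (halt : IsAlt R)
    (htor2 : ∀ x : R, (2 : ℕ) • x = 0 → x = 0) (he : e * e = e) (h : e * p = -p) :
    p = 0 := by
  have h' := (halt e p).1
  rw [he, h, mul_neg, h, neg_neg] at h'
  exact htor2 p (by linear_combination (norm := abel) -h')

theorem eq_zero_of_mul_idem_eq_add_self (halt : IsAlt R)
    (htor2 : ∀ x : R, (2 : ℕ) • x = 0 → x = 0) (he : e * e = e) (h : p * e = p + p) :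
    p = 0 := by
  have h' := (halt e p).2
  rw [he, h, add_mul, h] at h'
  exact htor2 p (by linear_combination (norm := abel) h')

theorem eq_zero_of_mul_idem_eq_neg (halt : IsAlt R)
    (htor2 : ∀ x : R, (2 : ℕ) • x = 0 → x = 0) (he : e * e = e) (h : p * e = -p) :
    p = 0 := by
  have h' := (halt e p).2
  rw [he, h, neg_mul, h, neg_neg] at h'
  exact htor2 p (by linear_combination (norm := abel) h')

variable {a b r x y : R}

theorem P11_mul_P11_mem (halt : IsAlt R) (ha : a ∈ P11 e) (hb : b ∈ P11 e) :
    a * b ∈ P11 e := by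
  obtain ⟨ha₁, ha₂⟩ := ha; obtain ⟨hb₁, hb₂⟩ := hb
  constructor
  · rw [halt.mul_mul_expand_left, ha₁, ha₂, hb₁]; abel
  · rw [halt.mul_mul_expand_right, hb₂, ha₂, hb₁]; abel

theorem P11_mul_P12_mem (halt : IsAlt R) (ha : a ∈ P11 e) (hx : x ∈ P12 e) :
    a * x ∈ P12 e := by
  obtain ⟨ha₁, ha₂⟩ := ha; obtain ⟨hx₁, hx₂⟩ := hx
  constructor
  · rw [halt.mul_mul_expand_left, ha₁, ha₂, hx₁]; abel
  · rw [halt.mul_mul_expand_right, hx₂, mul_zero, ha₂, hx₁]; abel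

theorem P12_mul_P22_mem (halt : IsAlt R) (hx : x ∈ P12 e) (hb : b ∈ P22 e) :
    x * b ∈ P12 e := by
  obtain ⟨hx₁, hx₂⟩ := hx; obtain ⟨hb₁, hb₂⟩ := hb
  constructor
  · rw [halt.mul_mul_expand_left, hx₁, hx₂, zero_mul, hb₁, mul_zero]; abel
  · rw [halt.mul_mul_expand_right, hb₂, mul_zero, hx₂, zero_mul, hb₁, mul_zero]; abel

theorem P12_mul_P21_mem (halt : IsAlt R) (hx : x ∈ P12 e) (hy : y ∈ P21 e) :
    x * y ∈ P11 e := by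
  obtain ⟨hx₁, hx₂⟩ := hx; obtain ⟨hy₁, hy₂⟩ := hy
  constructor
  · rw [halt.mul_mul_expand_left, hx₁, hx₂, zero_mul, hy₁, mul_zero]; abel
  · rw [halt.mul_mul_expand_right, hy₂, hx₂, zero_mul, hy₁, mul_zero]; abel

theorem P21_mul_P12_mem (halt : IsAlt R) (hy : y ∈ P21 e) (hx : x ∈ P12 e) :
    y * x ∈ P22 e := by
  obtain ⟨hy₁, hy₂⟩ := hy; obtain ⟨hx₁, hx₂⟩ := hx
  constructor
  · rw [halt.mul_mul_expand_left, hy₁, hy₂, zero_mul, hx₁]; abel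
  · rw [halt.mul_mul_expand_right, hx₂, mul_zero, hy₂, hx₁]; abel

theorem P22_mul_P22_mem (halt : IsAlt R) (ha : a ∈ P22 e) (hb : b ∈ P22 e) :
    a * b ∈ P22 e := by
  obtain ⟨ha₁, ha₂⟩ := ha; obtain ⟨hb₁, hb₂⟩ := hb
  constructor
  · rw [halt.mul_mul_expand_left, ha₁, ha₂, zero_mul, hb₁, mul_zero]; abel
  · rw [halt.mul_mul_expand_right, hb₂, mul_zero, ha₂, zero_mul, hb₁, mul_zero]; abel

theorem P21_mul_P11_mem (halt : IsAlt R) (hy : y ∈ P21 e) (ha : a ∈ P11 e) :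
    y * a ∈ P21 e := by
  obtain ⟨hy₁, hy₂⟩ := hy; obtain ⟨ha₁, ha₂⟩ := ha
  constructor
  · rw [halt.mul_mul_expand_left, hy₁, hy₂, zero_mul, ha₁]; abel
  · rw [halt.mul_mul_expand_right, ha₂, hy₂, ha₁]; abel

theorem P22_mul_P21_mem (halt : IsAlt R) (hb : b ∈ P22 e) (hy : y ∈ P21 e) :
    b * y ∈ P21 e := by
  obtain ⟨hb₁, hb₂⟩ := hb; obtain ⟨hy₁, hy₂⟩ := hy
  constructor
  · rw [halt.mul_mul_expand_left, hb₁, hb₂, zero_mul, hy₁, mul_zero]; abel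
  · rw [halt.mul_mul_expand_right, hy₂, hb₂, zero_mul, hy₁, mul_zero]; abel

theorem P12_mul_P11_eq_zero (halt : IsAlt R)
    (htor2 : ∀ x : R, (2 : ℕ) • x = 0 → x = 0) (he : e * e = e)
    (hx : x ∈ P12 e) (ha : a ∈ P11 e) : x * a = 0 := by
  obtain ⟨hx₁, hx₂⟩ := hx; obtain ⟨ha₁, ha₂⟩ := ha
  refine halt.eq_zero_of_mul_idem_eq_add_self htor2 he ?_
  rw [halt.mul_mul_expand_right, ha₂, hx₂, zero_mul, ha₁]; abel

theorem P22_mul_P12_eq_zero (halt : IsAlt R)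
    (htor2 : ∀ x : R, (2 : ℕ) • x = 0 → x = 0) (he : e * e = e)
    (hb : b ∈ P22 e) (hx : x ∈ P12 e) : b * x = 0 := by
  obtain ⟨hb₁, hb₂⟩ := hb; obtain ⟨hx₁, hx₂⟩ := hx
  refine halt.eq_zero_of_idem_mul_eq_neg htor2 he ?_
  rw [halt.mul_mul_expand_left, hb₁, hb₂, zero_mul, hx₁]; abel

theorem P11_mul_P22_eq_zero (halt : IsAlt R)
    (htor2 : ∀ x : R, (2 : ℕ) • x = 0 → x = 0) (he : e * e = e)
    (ha : a ∈ P11 e) (hb : b ∈ P22 e) : a * b = 0 := by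
  obtain ⟨ha₁, ha₂⟩ := ha; obtain ⟨hb₁, hb₂⟩ := hb
  refine halt.eq_zero_of_idem_mul_eq_add_self htor2 he ?_
  rw [halt.mul_mul_expand_left, ha₁, ha₂, hb₁, mul_zero]; abel

theorem P22_mul_P11_eq_zero (halt : IsAlt R)
    (htor2 : ∀ x : R, (2 : ℕ) • x = 0 → x = 0) (he : e * e = e)
    (hb : b ∈ P22 e) (ha : a ∈ P11 e) : b * a = 0 := by
  obtain ⟨hb₁, hb₂⟩ := hb; obtain ⟨ha₁, ha₂⟩ := ha
  refine halt.eq_zero_of_idem_mul_eq_neg htor2 he ?_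
  rw [halt.mul_mul_expand_left, hb₁, hb₂, zero_mul, ha₁]; abel

theorem P11_mul_P21_eq_zero (halt : IsAlt R)
    (htor2 : ∀ x : R, (2 : ℕ) • x = 0 → x = 0) (he : e * e = e)
    (ha : a ∈ P11 e) (hy : y ∈ P21 e) : a * y = 0 := by
  obtain ⟨ha₁, ha₂⟩ := ha; obtain ⟨hy₁, hy₂⟩ := hy
  refine halt.eq_zero_of_idem_mul_eq_add_self htor2 he ?_
  rw [halt.mul_mul_expand_left, ha₁, ha₂, hy₁, mul_zero]; abel

theorem P21_mul_P22_eq_zero (halt : IsAlt R)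
    (htor2 : ∀ x : R, (2 : ℕ) • x = 0 → x = 0) (he : e * e = e)
    (hy : y ∈ P21 e) (hb : b ∈ P22 e) : y * b = 0 := by
  obtain ⟨hy₁, hy₂⟩ := hy; obtain ⟨hb₁, hb₂⟩ := hb
  refine halt.eq_zero_of_mul_idem_eq_neg htor2 he ?_
  rw [halt.mul_mul_expand_right, hb₂, mul_zero, hy₂, hb₁, mul_zero]; abel

theorem exists_peirce_decomposition (halt : IsAlt R) (he : e * e = e) (t : R) :
    ∃ p ∈ P11 e, ∃ q ∈ P12 e, ∃ u ∈ P21 e, ∃ v ∈ P22 e, t = p + q + u + v := by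
  have hl : ∀ s : R, e * (e * s) = e * s := fun s => by rw [← (halt e s).1, he]
  have hr : ∀ s : R, s * e * e = s * e := fun s => by rw [(halt e s).2, he]
  have hp : e * (t * e) * e = e * (t * e) := by rw [halt.flexible, hr]
  refine ⟨e * (t * e), ⟨hl _, hp⟩, e * t - e * (t * e), ⟨?_, ?_⟩,
    t * e - e * (t * e), ⟨?_, ?_⟩, t - e * t - t * e + e * (t * e), ⟨?_, ?_⟩, by abel⟩
  · rw [mul_sub, hl, hl]
  · rw [sub_mul, halt.flexible, hp, sub_self]
  · rw [mul_sub, hl, sub_self]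
  · rw [sub_mul, hr, hp]
  · rw [mul_add, mul_sub, mul_sub, hl, hl]; abel
  · rw [add_mul, sub_mul, sub_mul, halt.flexible, hr, hp]; abel

theorem lie_mem_P11 (halt : IsAlt R) (htor2 : ∀ x : R, (2 : ℕ) • x = 0 → x = 0)
    (he : e * e = e) (ha : a ∈ P11 e) (hb : b ∈ P22 e) (hr : r ∈ P11 e) :
    ⁅a + b, r⁆ ∈ P11 e := by
  rw [Ring.lie_def, add_mul, mul_add, halt.P22_mul_P11_eq_zero htor2 he hb hr,
    halt.P11_mul_P22_eq_zero htor2 he hr hb, add_zero, add_zero]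
  exact P11_sub_mem (halt.P11_mul_P11_mem ha hr) (halt.P11_mul_P11_mem hr ha)

theorem lie_mem_P22 (halt : IsAlt R) (htor2 : ∀ x : R, (2 : ℕ) • x = 0 → x = 0)
    (he : e * e = e) (ha : a ∈ P11 e) (hb : b ∈ P22 e) (hr : r ∈ P22 e) :
    ⁅a + b, r⁆ ∈ P22 e := by
  rw [Ring.lie_def, add_mul, mul_add, halt.P11_mul_P22_eq_zero htor2 he ha hr,
    halt.P22_mul_P11_eq_zero htor2 he hr ha, zero_add, zero_add]
  exact P22_sub_mem (halt.P22_mul_P22_mem hb hr) (halt.P22_mul_P22_mem hr hb)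

theorem lie_mem_P21 (halt : IsAlt R) (htor2 : ∀ x : R, (2 : ℕ) • x = 0 → x = 0)
    (he : e * e = e) (ha : a ∈ P11 e) (hb : b ∈ P22 e) (hr : r ∈ P21 e) :
    ⁅a + b, r⁆ ∈ P21 e := by
  rw [Ring.lie_def, add_mul, mul_add, halt.P11_mul_P21_eq_zero htor2 he ha hr,
    halt.P21_mul_P22_eq_zero htor2 he hr hb, zero_add, add_zero]
  exact P21_sub_mem (halt.P22_mul_P21_mem hb hr) (halt.P21_mul_P11_mem hr ha)

theorem commute_of_mem_P11 (halt : IsAlt R) (htor2 : ∀ x : R, (2 : ℕ) • x = 0 → x = 0)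
    (he : e * e = e) (hP11 : ∀ x ∈ P11 e, (∀ y ∈ P12 e, x * y = 0) → x = 0)
    (ha : a ∈ P11 e) (hb : b ∈ P22 e) (hcom : ∀ x ∈ P12 e, Commute (a + b) x)
    (hr : r ∈ P11 e) : Commute (a + b) r := by
  have hc := halt.lie_mem_P11 htor2 he ha hb hr
  refine commute_iff_lie_eq.mpr (hP11 _ hc fun x hx => ?_)
  have hxr := halt.P12_mul_P11_eq_zero htor2 he hx hr
  have h := halt.lie_mul_add_mul_lie_eq_zero (hcom x hx) (hcom _ (halt.P11_mul_P12_mem hr hx))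
    (hxr ▸ Commute.zero_right _)
  rwa [halt.P12_mul_P11_eq_zero htor2 he hx hc, add_zero] at h

theorem commute_of_mem_P22 (halt : IsAlt R) (htor2 : ∀ x : R, (2 : ℕ) • x = 0 → x = 0)
    (he : e * e = e) (hP22 : ∀ x ∈ P22 e, (∀ y ∈ P12 e, y * x = 0) → x = 0)
    (ha : a ∈ P11 e) (hb : b ∈ P22 e) (hcom : ∀ x ∈ P12 e, Commute (a + b) x)
    (hr : r ∈ P22 e) : Commute (a + b) r := by
  have hc := halt.lie_mem_P22 htor2 he ha hb hr
  refine commute_iff_lie_eq.mpr (hP22 _ hc fun x hx => ?_)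
  have hrx := halt.P22_mul_P12_eq_zero htor2 he hr hx
  have h := halt.lie_mul_add_mul_lie_eq_zero (hcom x hx) (hrx ▸ Commute.zero_right _)
    (hcom _ (halt.P12_mul_P22_mem hx hr))
  rwa [halt.P22_mul_P12_eq_zero htor2 he hc hx, zero_add] at h

theorem commute_of_mem_P21 (halt : IsAlt R) (htor2 : ∀ x : R, (2 : ℕ) • x = 0 → x = 0)
    (he : e * e = e) (hP11 : ∀ x ∈ P11 e, (∀ y ∈ P12 e, x * y = 0) → x = 0)
    (hP22 : ∀ x ∈ P22 e, (∀ y ∈ P12 e, y * x = 0) → x = 0)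
    (hP21 : ∀ x ∈ P21 e, (∀ y ∈ P12 e, x * y = 0 ∧ y * x = 0) → x = 0)
    (ha : a ∈ P11 e) (hb : b ∈ P22 e) (hcom : ∀ x ∈ P12 e, Commute (a + b) x)
    (hr : r ∈ P21 e) : Commute (a + b) r := by
  have hc := halt.lie_mem_P21 htor2 he ha hb hr
  refine commute_iff_lie_eq.mpr (hP21 _ hc fun x hx => ?_)
  have h := halt.lie_mul_add_mul_lie_eq_zero (hcom x hx)
    (halt.commute_of_mem_P22 htor2 he hP22 ha hb hcom (halt.P21_mul_P12_mem hr hx))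
    (halt.commute_of_mem_P11 htor2 he hP11 ha hb hcom (halt.P12_mul_P21_mem hx hr))
  -- left multiplication by `e` kills the summand in `P22 e`
  have hxc : x * ⁅a + b, r⁆ = 0 := by
    simpa only [mul_add, mul_zero, (halt.P21_mul_P12_mem hc hx).1,
      (halt.P12_mul_P21_mem hx hc).1, zero_add] using congrArg (e * ·) h
  exact ⟨by rwa [hxc, add_zero] at h, hxc⟩

theorem mem_rctr_of_commute_P12 (halt : IsAlt R) (htor2 : ∀ x : R, (2 : ℕ) • x = 0 → x = 0)
    (he : e * e = e) (hP11 : ∀ x ∈ P11 e, (∀ y ∈ P12 e, x * y = 0) → x = 0)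
    (hP22 : ∀ x ∈ P22 e, (∀ y ∈ P12 e, y * x = 0) → x = 0)
    (hP21 : ∀ x ∈ P21 e, (∀ y ∈ P12 e, x * y = 0 ∧ y * x = 0) → x = 0)
    (ha : a ∈ P11 e) (hb : b ∈ P22 e) (hcom : ∀ x ∈ P12 e, Commute (a + b) x) :
    a + b ∈ rctr R := by
  intro t
  obtain ⟨p, hp, q, hq, u, hu, v, hv, rfl⟩ := halt.exists_peirce_decomposition he t
  exact (((halt.commute_of_mem_P11 htor2 he hP11 ha hb hcom hp).add_right (hcom q hq)).add_right
    (halt.commute_of_mem_P21 htor2 he hP11 hP22 hP21 ha hb hcom hu)).add_right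
    (halt.commute_of_mem_P22 htor2 he hP22 ha hb hcom hv)

end IsAlt

section Opposite

open MulOpposite

variable {R : Type*} [NonUnitalNonAssocRing R] {e : R} {x : Rᵐᵒᵖ}

theorem mem_P11_op_iff : x ∈ P11 (op e) ↔ x.unop ∈ P11 e := by
  simp only [P11, Set.mem_ofPred_eq, ← unop_inj (α := R), unop_mul, unop_op, and_comm]

theorem mem_P12_op_iff : x ∈ P12 (op e) ↔ x.unop ∈ P21 e := by
  simp only [P12, P21, Set.mem_ofPred_eq, ← unop_inj (α := R), unop_mul, unop_op, unop_zero,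
    and_comm]

theorem mem_P21_op_iff : x ∈ P21 (op e) ↔ x.unop ∈ P12 e := by
  simp only [P12, P21, Set.mem_ofPred_eq, ← unop_inj (α := R), unop_mul, unop_op, unop_zero,
    and_comm]

theorem mem_P22_op_iff : x ∈ P22 (op e) ↔ x.unop ∈ P22 e := by
  simp only [P22, Set.mem_ofPred_eq, ← unop_inj (α := R), unop_mul, unop_op, unop_zero, and_comm]

theorem mem_rctr_op_iff : x ∈ rctr Rᵐᵒᵖ ↔ x.unop ∈ rctr R := by
  simp only [rctr, Set.mem_ofPred_eq, ← unop_inj (α := R), unop_mul]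
  exact ⟨fun h y => (h (op y)).symm, fun h y => (h y.unop).symm⟩

end Opposite

open MulOpposite in
theorem IsAlt.mem_rctr_of_commute_P21 {R : Type*} [NonUnitalNonAssocRing R] {e a b : R}
    (halt : IsAlt R) (htor2 : ∀ x : R, (2 : ℕ) • x = 0 → x = 0) (he : e * e = e)
    (hP11 : ∀ x ∈ P11 e, (∀ y ∈ P21 e, y * x = 0) → x = 0)
    (hP22 : ∀ x ∈ P22 e, (∀ y ∈ P21 e, x * y = 0) → x = 0)
    (hP12 : ∀ x ∈ P12 e, (∀ y ∈ P21 e, y * x = 0 ∧ x * y = 0) → x = 0)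
    (ha : a ∈ P11 e) (hb : b ∈ P22 e) (hcom : ∀ x ∈ P21 e, Commute (a + b) x) :
    a + b ∈ rctr R := by
  have h := halt.mulOpposite.mem_rctr_of_commute_P12 (e := op e) (a := op a) (b := op b)
    (fun x hx => unop_injective (htor2 x.unop (by simpa using congrArg unop hx)))
    (congrArg op he)
    (fun x hx h => unop_injective <| hP11 _ (mem_P11_op_iff.mp hx) fun y hy => by
      simpa using congrArg unop (h (op y) (mem_P12_op_iff.mpr hy)))
    (fun x hx h => unop_injective <| hP22 _ (mem_P22_op_iff.mp hx) fun y hy => by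
      simpa using congrArg unop (h (op y) (mem_P12_op_iff.mpr hy)))
    (fun x hx h => unop_injective <| hP12 _ (mem_P21_op_iff.mp hx) fun y hy => by
      have hy' := h (op y) (mem_P12_op_iff.mpr hy)
      exact ⟨by simpa using congrArg unop hy'.1, by simpa using congrArg unop hy'.2⟩)
    (mem_P11_op_iff.mpr ha) (mem_P22_op_iff.mpr hb)
    (fun x hx => (hcom x.unop (mem_P12_op_iff.mp hx)).op)
  exact mem_rctr_op_iff.mp h

theorem stmt9_general {R : Type*} [NonUnitalNonAssocRing R] (halt : IsAlt R)
    (htor2 : ∀ x : R, (2 : ℕ) • x = 0 → x = 0)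
    (e₁ : R) (he : e₁ * e₁ = e₁)
    (hc1 : (∀ x ∈ P12 e₁, (∀ y ∈ P21 e₁, x * y = 0) → x = 0) ∧
           (∀ x ∈ P21 e₁, (∀ y ∈ P12 e₁, x * y = 0) → x = 0))
    (hc2 : (∀ x ∈ P11 e₁, (∀ y ∈ P12 e₁, x * y = 0) → x = 0) ∧
           (∀ x ∈ P11 e₁, (∀ y ∈ P21 e₁, y * x = 0) → x = 0))
    (hc3 : (∀ x ∈ P22 e₁, (∀ y ∈ P12 e₁, y * x = 0) → x = 0) ∧
           (∀ x ∈ P22 e₁, (∀ y ∈ P21 e₁, x * y = 0) → x = 0)) :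
    (∀ a ∈ P11 e₁, ∀ b ∈ P22 e₁,
      (∀ x ∈ P12 e₁, (a + b) * x = x * (a + b)) → a + b ∈ rctr R) ∧
    (∀ a ∈ P11 e₁, ∀ b ∈ P22 e₁,
      (∀ x ∈ P21 e₁, (a + b) * x = x * (a + b)) → a + b ∈ rctr R) :=
  ⟨fun _ ha _ hb hcom => halt.mem_rctr_of_commute_P12 htor2 he hc2.1 hc3.1
      (fun x hx h => hc1.2 x hx fun y hy => (h y hy).1) ha hb hcom,
    fun _ ha _ hb hcom => halt.mem_rctr_of_commute_P21 htor2 he hc2.2 hc3.2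
      (fun x hx h => hc1.1 x hx fun y hy => (h y hy).2) ha hb hcom⟩

theorem stmt9 {R : Type*} [NonUnitalNonAssocRing R] (halt : IsAlt R)
    (htor2 : ∀ x : R, (2 : ℕ) • x = 0 → x = 0)
    (htor3 : ∀ x : R, (3 : ℕ) • x = 0 → x = 0)
    (e₁ : R) (he : e₁ * e₁ = e₁) (hne : e₁ ≠ 0)
    (hnu : ¬ ∀ x : R, e₁ * x = x ∧ x * e₁ = x)
    (hc1 : (∀ x ∈ P12 e₁, (∀ y ∈ P21 e₁, x * y = 0) → x = 0) ∧
           (∀ x ∈ P21 e₁, (∀ y ∈ P12 e₁, x * y = 0) → x = 0))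
    (hc2 : (∀ x ∈ P11 e₁, (∀ y ∈ P12 e₁, x * y = 0) → x = 0) ∧
           (∀ x ∈ P11 e₁, (∀ y ∈ P21 e₁, y * x = 0) → x = 0))
    (hc3 : (∀ x ∈ P22 e₁, (∀ y ∈ P12 e₁, y * x = 0) → x = 0) ∧
           (∀ x ∈ P22 e₁, (∀ y ∈ P21 e₁, x * y = 0) → x = 0)) :
    (∀ a ∈ P11 e₁, ∀ b ∈ P22 e₁,
      (∀ x ∈ P12 e₁, (a + b) * x = x * (a + b)) → a + b ∈ rctr R) ∧
    (∀ a ∈ P11 e₁, ∀ b ∈ P22 e₁,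
      (∀ x ∈ P21 e₁, (a + b) * x = x * (a + b)) → a + b ∈ rctr R) :=
  stmt9_general halt htor2 e₁ he hc1 hc2 hc3
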